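/- Secure sketch for edit distance: let F be a finite alphabet of size F. For any n, any shingle length c with 1 ≤ c ≤ n, any t, and any m, there exists an average-case (Edit_F(n), m, m − ⌈n/c⌉·log₂(n−c+1) − (2c−1)·t·⌈log₂(F^c + 1)⌉, t)-secure sketch. -/

import Mathlib

open Finset

/-- A probability distribution on a finite type. -/
def IsDist {α : Type*} [Fintype α] (p : α → ℝ) : Prop :=
  (∀ a, 0 ≤ p a) ∧ ∑ a, p a = 1

/-- Average min-entropy `H̃∞(A | B)`. -/
noncomputable def avgMinEntropy {α β : Type*} [Fintype α] [Fintype β] (p : α × β → ℝ) : ℝ :=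
  - Real.logb 2 (∑ b, ⨆ a, p (a, b))

/-- A single edit step on strings (lists): insertion or deletion of one character. -/
def EditStep {F : Type} (u v : List F) : Prop :=
  (∃ (l : List F) (x : F) (r : List F), u = l ++ r ∧ v = l ++ x :: r) ∨
  (∃ (l : List F) (x : F) (r : List F), u = l ++ x :: r ∧ v = l ++ r)

/-- `EditLe t u v` means the edit distance (insertions and deletions) between `u` and `v`
is at most `t`. -/
def EditLe {F : Type} : ℕ → List F → List F → Prop
  | 0, u, v => u = v
  | t + 1, u, v => EditLe t u v ∨ ∃ z, EditStep u z ∧ EditLe t z v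

/-! Colour the strings `Fin n → F` so that strings within edit distance `2t` get different
colours. The colour of `w` is a sketch: `w` is the only string of its colour within distance `t`
of `w'`. Revealing one of `K` colours costs at most `log₂ K` bits of average min-entropy. A greedy
colouring needs no more colours than a `2t`-ball has strings, and a string `w` in the `2t`-ball
around `u` is determined by the `k ≤ t` positions deleted from `u` and from `w` to reach a common
subsequence together with the letters of `w` at its deleted positions. Hence
`K ≤ min (|F|^n, ∑_{k ≤ t} C(n,k)² |F|^k)`, and elementary estimates (the first term when
`n ≤ c(2c-1)t`) bound this by `(n - c + 1)^⌈n/c⌉ (|F|^c + 1)^((2c-1)t)`. -/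

open scoped List

theorem EditStep.symm {F : Type} {u v : List F} (h : EditStep u v) : EditStep v u := by
  rcases h with ⟨l, x, r, rfl, rfl⟩ | ⟨l, x, r, rfl, rfl⟩
  · exact Or.inr ⟨l, x, r, rfl, rfl⟩
  · exact Or.inl ⟨l, x, r, rfl, rfl⟩

namespace EditLe

variable {F : Type}

theorem refl (t : ℕ) (u : List F) : EditLe t u u := by
  induction t with
  | zero => rfl
  | succ t ih => exact Or.inl ih

theorem trans {a b : ℕ} {u v w : List F} (h₁ : EditLe a u v) (h₂ : EditLe b v w) :
    EditLe (a + b) u w := by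
  induction a generalizing u with
  | zero => rw [Nat.zero_add]; exact (show u = v from h₁) ▸ h₂
  | succ a ih =>
    rw [Nat.succ_add]
    rcases h₁ with h | ⟨z, hz, h⟩
    · exact Or.inl (ih h)
    · exact Or.inr ⟨z, hz, ih h⟩

theorem step_right {t : ℕ} {u v w : List F} (h : EditLe t u v) (hs : EditStep v w) :
    EditLe (t + 1) u w :=
  trans h (Or.inr ⟨w, hs, rfl⟩)

theorem symm {t : ℕ} {u v : List F} (h : EditLe t u v) : EditLe t v u := by
  induction t generalizing u v with
  | zero => exact (show u = v from h).symm
  | succ t ih =>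
    rcases h with h | ⟨z, hz, h⟩
    · exact Or.inl (ih h)
    · exact step_right (ih h) hz.symm

end EditLe

theorem EditStep.exists_sublist {F : Type} {u z s : List F} (h : EditStep u z) (hs : s <+ z) :
    ∃ s', s' <+ s ∧ s' <+ u ∧ u.length + 2 * s.length ≤ z.length + 1 + 2 * s'.length := by
  rcases h with ⟨l, x, r, rfl, rfl⟩ | ⟨l, x, r, rfl, rfl⟩
  · obtain ⟨s₁, s₂, rfl, h₁, h₂⟩ := List.sublist_append_iff.mp hs
    rcases List.sublist_cons_iff.mp h₂ with h₂ | ⟨s₂, rfl, h₃⟩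
    · refine ⟨s₁ ++ s₂, .refl _, h₁.append h₂, ?_⟩
      simp only [List.length_append, List.length_cons]; omega
    · refine ⟨s₁ ++ s₂, (List.sublist_cons_self _ _).append_left _, h₁.append h₃, ?_⟩
      simp only [List.length_append, List.length_cons]; omega
  · refine ⟨s, .refl _, hs.trans ((List.sublist_cons_self _ _).append_left _), ?_⟩
    simp only [List.length_append, List.length_cons]; omega

theorem EditLe.exists_common_sublist {F : Type} {d : ℕ} {u v : List F} (h : EditLe d u v) :
    ∃ s, s <+ u ∧ s <+ v ∧ u.length + v.length ≤ d + 2 * s.length := by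
  induction d generalizing u with
  | zero => exact ⟨u, .refl _, (show u = v from h) ▸ .refl _, by rw [show u = v from h]; omega⟩
  | succ d ih =>
    rcases h with h | ⟨z, hz, h⟩
    · obtain ⟨s, hsu, hsv, hlen⟩ := ih h
      exact ⟨s, hsu, hsv, by omega⟩
    · obtain ⟨s, hsz, hsv, hlen⟩ := ih h
      obtain ⟨s', hs's, hs'u, hlen'⟩ := hz.exists_sublist hsz
      exact ⟨s', hs'u, hs's.trans hsv, by omega⟩

theorem List.exists_finset_of_sublist_ofFn {α : Type*} {n : ℕ} {u : Fin n → α} {s : List α}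
    (h : s <+ List.ofFn u) : ∃ E : Finset (Fin n), s = E.sort.map u := by
  classical
  rw [List.ofFn_eq_map, List.sublist_map_iff] at h
  obtain ⟨l, hl, rfl⟩ := h
  refine ⟨l.toFinset, ?_⟩
  rw [(List.toFinset_sort _ (hl.nodup (List.nodup_finRange n))).mpr]
  exact ((List.sortedLT_finRange n).pairwise.imp le_of_lt).sublist hl

abbrev EditCode (n t : ℕ) (F : Type) : Type :=
  Σ k : Fin (t + 1),
    {D : Finset (Fin n) // D.card = k} × {D : Finset (Fin n) // D.card = k} × List.Vector F k

def IsEditCode {n t : ℕ} {F : Type} (u w : Fin n → F) : EditCode n t F → Prop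
  | ⟨_, Du, Dw, x⟩ => Du.1ᶜ.sort.map u = Dw.1ᶜ.sort.map w ∧ Dw.1.sort.map w = x.toList

section EditCode

variable {n t : ℕ} {F : Type}

theorem IsEditCode.unique {u w w' : Fin n → F} {d : EditCode n t F}
    (h : IsEditCode u w d) (h' : IsEditCode u w' d) : w = w' := by
  obtain ⟨k, ⟨Du, hu⟩, ⟨Dw, hw⟩, x⟩ := d
  obtain ⟨hkept, hdel⟩ := h
  obtain ⟨hkept', hdel'⟩ := h'
  funext i
  by_cases hi : i ∈ Dw
  · exact List.map_inj_left.mp (hdel.trans hdel'.symm) i ((Finset.mem_sort _).mpr hi)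
  · exact List.map_inj_left.mp (hkept.symm.trans hkept') i (by simpa using hi)

theorem EditLe.exists_isEditCode {u w : Fin n → F}
    (h : EditLe (t + t) (List.ofFn u) (List.ofFn w)) : ∃ d : EditCode n t F, IsEditCode u w d := by
  obtain ⟨s, hsu, hsw, hlen⟩ := h.exists_common_sublist
  obtain ⟨Eu, rfl⟩ := List.exists_finset_of_sublist_ofFn hsu
  obtain ⟨Ew, hEw⟩ := List.exists_finset_of_sublist_ofFn hsw
  have hcard : Ew.card = Eu.card := by simpa using congrArg List.length hEw.symm
  simp only [List.length_ofFn, List.length_map, Finset.length_sort] at hlen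
  refine ⟨⟨⟨n - Eu.card, by omega⟩, ⟨Euᶜ, by simp [Finset.card_compl]⟩,
    ⟨Ewᶜ, by simp [Finset.card_compl, hcard]⟩,
    ⟨Ewᶜ.sort.map w, by simp [Finset.card_compl, hcard]⟩⟩,
    ?_, rfl⟩
  simpa only [compl_compl] using hEw

def editBallBound (n t f : ℕ) : ℕ :=
  ∑ k ∈ Finset.range (t + 1), n.choose k ^ 2 * f ^ k

theorem card_editCode [Fintype F] :
    Fintype.card (EditCode n t F) = editBallBound n t (Fintype.card F) := by
  simp [editBallBound, Fintype.card_sigma, Fintype.card_finset_len, card_vector, sq, mul_assoc,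
    Fin.sum_univ_eq_sum_range (fun k => n.choose k * (n.choose k * Fintype.card F ^ k))]

theorem card_le_editBallBound [Fintype F] {u : Fin n → F} {s : Finset (Fin n → F)}
    (hs : ∀ w ∈ s, EditLe (t + t) (List.ofFn u) (List.ofFn w)) :
    s.card ≤ editBallBound n t (Fintype.card F) := by
  rw [← card_editCode, ← Fintype.card_coe]
  refine Fintype.card_le_of_injective (fun w => (hs w.1 w.2).exists_isEditCode.choose) ?_
  intro w w' hww'
  have h := (hs w.1 w.2).exists_isEditCode.choose_spec
  have h' := (hs w'.1 w'.2).exists_isEditCode.choose_spec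
  dsimp only at hww'
  rw [← hww'] at h'
  exact Subtype.ext (h.unique h')

end EditCode

theorem SimpleGraph.colorable_of_forall_degree_lt {V : Type*} [Fintype V] (G : SimpleGraph V)
    [DecidableRel G.Adj] {K : ℕ} (h : ∀ v, G.degree v < K) : G.Colorable K := by
  classical
  suffices ∀ s : Finset V, ∃ C : V → Fin K, ∀ v ∈ s, ∀ w ∈ s, G.Adj v w → C v ≠ C w by
    obtain ⟨C, hC⟩ := this Finset.univ
    exact ⟨.mk C fun hvw => hC _ (Finset.mem_univ _) _ (Finset.mem_univ _) hvw⟩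
  intro s
  induction s using Finset.induction_on with
  | empty => exact ⟨fun v => ⟨0, (h v).trans_le' (Nat.zero_le _)⟩, by simp⟩
  | insert x s hx ih =>
    obtain ⟨C, hC⟩ := ih
    -- the coloured neighbours of `x` use fewer than `K` colours
    have hfree : ((s.filter (G.Adj x)).image C)ᶜ.Nonempty := by
      rw [Finset.nonempty_iff_ne_empty, Ne, Finset.compl_eq_empty_iff, ← Finset.card_eq_iff_eq_univ,
        Fintype.card_fin]
      refine (Finset.card_image_le.trans ?_).trans_lt (h x) |>.ne
      exact Finset.card_le_card fun w hw => by simpa using (Finset.mem_filter.mp hw).2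
    obtain ⟨c, hc⟩ := hfree
    have hcx : ∀ w ∈ s, G.Adj x w → c ≠ C w := fun w hw hxw hcw =>
      Finset.mem_compl.mp hc (Finset.mem_image.mpr ⟨w, Finset.mem_filter.mpr ⟨hw, hxw⟩, hcw.symm⟩)
    have hne : ∀ w ∈ s, w ≠ x := fun w hw hwx => hx (hwx ▸ hw)
    refine ⟨Function.update C x c, ?_⟩
    simp only [Finset.mem_insert]
    rintro v (rfl | hv) w (rfl | hw) hvw
    · exact (G.irrefl hvw).elim
    · simpa [hne w hw] using hcx w hw hvw
    · simpa [hne v hv] using (hcx v hv hvw.symm).symm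
    · simpa [hne v hv, hne w hw] using hC v hv w hw hvw

def editGraph (n d : ℕ) (F : Type) : SimpleGraph (Fin n → F) where
  Adj v w := v ≠ w ∧ EditLe d (List.ofFn v) (List.ofFn w)
  symm := ⟨fun _ _ h => ⟨h.1.symm, h.2.symm⟩⟩
  loopless := ⟨fun _ h => h.1 rfl⟩

theorem editGraph_colorable (n t : ℕ) (F : Type) [Fintype F] :
    (editGraph n (t + t) F).Colorable
      (min (Fintype.card F ^ n) (editBallBound n t (Fintype.card F))) := by
  classical
  refine SimpleGraph.colorable_of_forall_degree_lt _ fun v => ?_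
  set G := editGraph n (t + t) F
  have hv : v ∉ G.neighborFinset v := by simp
  calc G.degree v < (insert v (G.neighborFinset v)).card := by
        rw [Finset.card_insert_of_notMem hv, SimpleGraph.card_neighborFinset_eq_degree]
        exact Nat.lt_succ_self _
    _ ≤ _ := by
      refine le_min (by simpa using Finset.card_le_univ (insert v (G.neighborFinset v)))
        (card_le_editBallBound (u := v) ?_)
      intro w hw
      rcases Finset.mem_insert.mp hw with rfl | hw
      · exact EditLe.refl _ _
      · exact ((G.mem_neighborFinset v w).mp hw).2

open Classical in
noncomputable def decodeColor {α γ : Type*} (χ : α → γ) (near : α → α → Prop) (w' : α) (s : γ) :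
    α :=
  if h : ∃ w, χ w = s ∧ near w w' then h.choose else w'

theorem decodeColor_apply {α γ : Type*} {χ : α → γ} {near : α → α → Prop} {w w' : α}
    (hχ : ∀ w₁ w₂, near w₁ w' → near w₂ w' → χ w₁ = χ w₂ → w₁ = w₂) (h : near w w') :
    decodeColor χ near w' (χ w) = w := by
  have hex : ∃ w₀, χ w₀ = χ w ∧ near w₀ w' := ⟨w, rfl, h⟩
  rw [decodeColor, dif_pos hex]
  exact hχ _ _ hex.choose_spec.2 h hex.choose_spec.1

theorem Nat.choose_sq_le_pow_self (n k : ℕ) : n.choose k ^ 2 ≤ n ^ n := by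
  rcases le_or_gt k n with hk | hk
  · calc n.choose k ^ 2 = n.choose k * n.choose (n - k) := by rw [sq, Nat.choose_symm hk]
      _ ≤ n ^ k * n ^ (n - k) := Nat.mul_le_mul (n.choose_le_pow k) (n.choose_le_pow (n - k))
      _ = n ^ n := by rw [← pow_add, Nat.add_sub_cancel' hk]
  · simp [Nat.choose_eq_zero_of_lt hk]

theorem Nat.sum_range_pow_le_succ_pow (f t : ℕ) :
    ∑ k ∈ Finset.range (t + 1), f ^ k ≤ (f + 1) ^ t := by
  rw [add_pow]
  refine Finset.sum_le_sum fun k hk => ?_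
  rw [one_pow, mul_one]
  exact Nat.le_mul_of_pos_right _ (Nat.choose_pos (Nat.lt_succ_iff.mp (Finset.mem_range.mp hk)))

section editBallBound

variable {n t f : ℕ}

theorem editBallBound_le_pow_self_mul : editBallBound n t f ≤ n ^ n * (f + 1) ^ t :=
  calc editBallBound n t f ≤ ∑ k ∈ Finset.range (t + 1), n ^ n * f ^ k :=
        Finset.sum_le_sum fun k _ => Nat.mul_le_mul_right _ (n.choose_sq_le_pow_self k)
    _ ≤ n ^ n * (f + 1) ^ t := by
        rw [← Finset.mul_sum]; exact Nat.mul_le_mul_left _ (f.sum_range_pow_le_succ_pow t)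

theorem editBallBound_le_pow_mul (hn : 1 ≤ n) : editBallBound n t f ≤ n ^ (2 * t) * (f + 1) ^ t :=
  calc editBallBound n t f ≤ ∑ k ∈ Finset.range (t + 1), n ^ (2 * t) * f ^ k := by
        refine Finset.sum_le_sum fun k hk => Nat.mul_le_mul_right _ ?_
        rw [mul_comm, pow_mul]
        exact Nat.pow_le_pow_left ((n.choose_le_pow k).trans
          (Nat.pow_le_pow_right hn (Nat.lt_succ_iff.mp (Finset.mem_range.mp hk)))) 2
    _ ≤ n ^ (2 * t) * (f + 1) ^ t := by
        rw [← Finset.mul_sum]; exact Nat.mul_le_mul_left _ (f.sum_range_pow_le_succ_pow t)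

theorem editBallBound_le_of_two_le {c : ℕ} (hc : 2 ≤ c) (hf : 1 ≤ f)
    (hn : c * ((2 * c - 1) * t) < n) :
    editBallBound n t f ≤
      (n - c + 1) ^ ((2 * c - 1) * t + 1) * (f ^ c + 1) ^ ((2 * c - 1) * t) := by
  have h3t : 3 * t ≤ (2 * c - 1) * t := Nat.mul_le_mul_right t (by omega)
  -- `n ≤ 2 (n - c + 1)` once `t ≥ 1`, and `2 ≤ f ^ c + 1` pays for the factor `2`
  have hn2 : n ^ (2 * t) ≤ (n - c + 1) ^ (2 * t) * (f ^ c + 1) ^ (2 * t) := by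
    rcases Nat.eq_zero_or_pos t with rfl | ht
    · simp
    have : c * 3 ≤ c * ((2 * c - 1) * t) := Nat.mul_le_mul_left c (by nlinarith)
    rw [← mul_pow]
    refine Nat.pow_le_pow_left ?_ _
    calc n ≤ (n - c + 1) * 2 := by omega
      _ ≤ (n - c + 1) * (f ^ c + 1) :=
          Nat.mul_le_mul_left _ (Nat.succ_le_succ (Nat.one_le_pow _ _ hf))
  calc editBallBound n t f ≤ n ^ (2 * t) * (f + 1) ^ t := editBallBound_le_pow_mul (by omega)
    _ ≤ (n - c + 1) ^ (2 * t) * (f ^ c + 1) ^ (2 * t) * (f ^ c + 1) ^ t := by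
        gcongr; exact Nat.le_self_pow (by omega) f
    _ = (n - c + 1) ^ (2 * t) * (f ^ c + 1) ^ (3 * t) := by ring
    _ ≤ (n - c + 1) ^ ((2 * c - 1) * t + 1) * (f ^ c + 1) ^ ((2 * c - 1) * t) := by
        gcongr <;> omega

theorem exists_min_pow_editBallBound_le {c : ℕ} (hc : 1 ≤ c) (hf : 1 ≤ f) :
    ∃ E, c * E < n + c ∧
      min (f ^ n) (editBallBound n t f) ≤ (n - c + 1) ^ E * (f ^ c + 1) ^ ((2 * c - 1) * t) := by
  by_cases hfull : n ≤ c * ((2 * c - 1) * t)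
  · refine ⟨0, by omega, (min_le_left _ _).trans ?_⟩
    calc f ^ n ≤ (f ^ c) ^ ((2 * c - 1) * t) := pow_mul f c _ ▸ Nat.pow_le_pow_right hf hfull
      _ ≤ (n - c + 1) ^ 0 * (f ^ c + 1) ^ ((2 * c - 1) * t) := by
          rw [pow_zero, one_mul]; gcongr; omega
  rcases hc.eq_or_lt with rfl | hc
  · have hn : n - 1 + 1 = n := by omega
    exact ⟨n, by omega,
      (min_le_right _ _).trans (by simpa [hn] using editBallBound_le_pow_self_mul)⟩
  · exact ⟨(2 * c - 1) * t + 1, by rw [mul_add]; omega,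
      (min_le_right _ _).trans (editBallBound_le_of_two_le hc hf (by omega))⟩

end editBallBound

theorem logb_le_of_le_pow_mul_pow {n c E R f K : ℕ} (hc : 0 < c) (hcn : c ≤ n) (hK : 0 < K)
    (hE : c * E < n + c) (hKle : K ≤ (n - c + 1) ^ E * (f ^ c + 1) ^ R) :
    Real.logb 2 K ≤ ⌈(n : ℝ) / c⌉ * Real.logb 2 ((n : ℝ) - c + 1)
      + (R : ℝ) * ⌈Real.logb 2 ((f : ℝ) ^ c + 1)⌉ := by
  have hz : (1 : ℝ) ≤ n - c + 1 := by
    have : (c : ℝ) ≤ n := by exact_mod_cast hcn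
    linarith
  have hE' : (E : ℝ) ≤ ⌈(n : ℝ) / c⌉ := by
    have hcR : (0 : ℝ) < c := by exact_mod_cast hc
    have hER : (c : ℝ) * E < n + c := by exact_mod_cast hE
    have : ((E : ℤ) : ℝ) - 1 < n / c := by
      rw [lt_div_iff₀ hcR]; push_cast; linarith
    exact_mod_cast Int.le_ceil_iff.mpr this
  have hKle' : (K : ℝ) ≤ ((n : ℝ) - c + 1) ^ E * ((f : ℝ) ^ c + 1) ^ R := by
    rw [← Nat.cast_le (α := ℝ)] at hKle; push_cast [hcn] at hKle; exact hKle
  calc Real.logb 2 K ≤ Real.logb 2 (((n : ℝ) - c + 1) ^ E * ((f : ℝ) ^ c + 1) ^ R) :=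
        Real.logb_le_logb_of_le one_lt_two (by exact_mod_cast hK) hKle'
    _ = E * Real.logb 2 ((n : ℝ) - c + 1) + R * Real.logb 2 ((f : ℝ) ^ c + 1) := by
        rw [Real.logb_mul (by positivity) (by positivity), Real.logb_pow, Real.logb_pow]
    _ ≤ _ := by
        gcongr
        · exact Real.logb_nonneg one_lt_two hz
        · exact Int.le_ceil _

section Entropy

variable {α β γ : Type*} [Fintype α] [Fintype β] [Fintype γ]

theorem IsDist.exists_pos {p : α → ℝ} (hp : IsDist p) : ∃ a, 0 < p a := by
  by_contra! h
  have : ∑ a, p a = 0 := Finset.sum_eq_zero fun a _ => le_antisymm (h a) (hp.1 a)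
  linarith [hp.2]

/-- `q` plays the joint distribution of `(A, S, B)`, dominated pointwise by the joint distribution
`p` of `(A, B)`. -/
theorem avgMinEntropy_sub_logb_card_le {p : α × β → ℝ} {q : α × γ × β → ℝ}
    (hqp : ∀ a s b, q (a, s, b) ≤ p (a, b)) (hq : 0 < ∑ sb, ⨆ a, q (a, sb)) :
    avgMinEntropy p - Real.logb 2 (Fintype.card γ) ≤ avgMinEntropy q := by
  have hle : ∑ sb, ⨆ a, q (a, sb) ≤ Fintype.card γ * ∑ b, ⨆ a, p (a, b) :=
    calc ∑ sb, ⨆ a, q (a, sb) ≤ ∑ sb : γ × β, ⨆ a, p (a, sb.2) :=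
          Finset.sum_le_sum fun sb _ =>
            ciSup_mono (Set.finite_range _).bddAbove fun a => hqp a sb.1 sb.2
      _ = Fintype.card γ * ∑ b, ⨆ a, p (a, b) := by
          simp only [Fintype.sum_prod_type, Finset.sum_const, nsmul_eq_mul, Finset.card_univ]
  have hpos := hq.trans_le hle
  have hγ : (Fintype.card γ : ℝ) ≠ 0 := fun h => by simp [h] at hpos
  have hp : 0 < ∑ b, ⨆ a, p (a, b) := pos_of_mul_pos_right hpos (Nat.cast_nonneg _)
  have := Real.logb_le_logb_of_le one_lt_two hq hle
  rw [Real.logb_mul hγ hp.ne'] at this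
  unfold avgMinEntropy
  linarith

theorem avgMinEntropy_sketch_ge [DecidableEq γ] {N : ℕ} (hN : 0 < N) (SS : α → Fin N → γ)
    {p : α × β → ℝ} (hp : IsDist p) :
    avgMinEntropy p - Real.logb 2 (Fintype.card γ) ≤
      avgMinEntropy (fun x : α × γ × β =>
        p (x.1, x.2.2) * ((Finset.univ.filter fun r : Fin N => SS x.1 r = x.2.1).card : ℝ)
          / (N : ℝ)) := by
  have hN' : (0 : ℝ) < N := by exact_mod_cast hN
  refine avgMinEntropy_sub_logb_card_le (fun a s b => ?_) ?_
  · rw [mul_div_assoc]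
    refine mul_le_of_le_one_right (hp.1 _) ((div_le_one hN').mpr ?_)
    exact_mod_cast (Finset.card_filter_le _ _).trans
      (Finset.card_univ.trans (Fintype.card_fin N)).le
  · obtain ⟨⟨a, b⟩, hab⟩ := hp.exists_pos
    set r₀ : Fin N := ⟨0, hN⟩
    have hcard : 0 < (Finset.univ.filter fun r : Fin N => SS a r = SS a r₀).card :=
      Finset.card_pos.mpr ⟨r₀, by simp⟩
    refine lt_of_lt_of_le ?_ (Finset.single_le_sum (fun sb _ => Real.iSup_nonneg fun a => ?_)
      (Finset.mem_univ (SS a r₀, b)))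
    · exact lt_of_lt_of_le (by positivity) (le_ciSup (Set.finite_range _).bddAbove a)
    · exact div_nonneg (mul_nonneg (hp.1 _) (Nat.cast_nonneg _)) hN'.le

end Entropy

/-- Secure sketch for edit distance: for any `n`, shingle length
`1 ≤ c ≤ n`, distance bound `t`, and min-entropy threshold `m`, there exists an
average-case
`(Edit_F(n), m, m − ⌈n/c⌉·log₂(n−c+1) − (2c−1)·t·⌈log₂(|F|^c + 1)⌉, t)`-secure sketch. -/
theorem edit_distance_secure_sketch {F : Type} [Fintype F] [Nonempty F]
    (n c t : ℕ) (hc1 : 1 ≤ c) (hcn : c ≤ n) (m : ℝ) :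
    ∃ (N N' : ℕ), 0 < N ∧
      ∃ (SS : (Fin n → F) → Fin N → Fin N') (Rec : (Fin n → F) → Fin N' → (Fin n → F)),
        -- correctness
        (∀ (w w' : Fin n → F) (r : Fin N),
          EditLe t (List.ofFn w) (List.ofFn w') → Rec w' (SS w r) = w) ∧
        -- average-case security
        ∀ (ι : Type) [Fintype ι] (p : (Fin n → F) × ι → ℝ),
          IsDist p → m ≤ avgMinEntropy p →
          m - (⌈(n : ℝ) / (c : ℝ)⌉ : ℝ) * Real.logb 2 ((n : ℝ) - (c : ℝ) + 1)
            - (((2 * c - 1) * t : ℕ) : ℝ)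
              * (⌈Real.logb 2 ((Fintype.card F : ℝ) ^ c + 1)⌉ : ℝ)
            ≤ avgMinEntropy (fun x : (Fin n → F) × Fin N' × ι =>
                p (x.1, x.2.2) *
                  ((Finset.univ.filter fun r : Fin N => SS x.1 r = x.2.1).card : ℝ)
                  / (N : ℝ)) := by
  have hF : 1 ≤ Fintype.card F := Fintype.card_pos
  set K := min (Fintype.card F ^ n) (editBallBound n t (Fintype.card F))
  obtain ⟨χ⟩ := editGraph_colorable n t F
  have hχ : ∀ w₁ w₂, χ w₁ = χ w₂ → EditLe (t + t) (List.ofFn w₁) (List.ofFn w₂) → w₁ = w₂ :=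
    fun w₁ w₂ hcol hedit => by_contra fun hne => χ.valid ⟨hne, hedit⟩ hcol
  let near (w w' : Fin n → F) := EditLe t (List.ofFn w) (List.ofFn w')
  refine ⟨1, K, one_pos, fun w _ => χ w, decodeColor χ near, fun w w' _ h =>
    decodeColor_apply (fun w₁ w₂ h₁ h₂ hcol => hχ w₁ w₂ hcol (h₁.trans h₂.symm)) h,
    fun ι _ p hp hm => ?_⟩
  obtain ⟨E, hE, hKle⟩ := exists_min_pow_editBallBound_le (n := n) (t := t) hc1 hF
  have hK : 0 < K := (χ fun _ => Classical.arbitrary F).pos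
  have hlogK := logb_le_of_le_pow_mul_pow hc1 hcn hK hE hKle
  have hsketch := avgMinEntropy_sketch_ge one_pos (fun w (_ : Fin 1) => χ w) hp
  rw [Fintype.card_fin] at hsketch
  linarith
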